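/- arXiv:math/0601204 — 12 statements merged into one kernel-verified Lean document; each statement's English description precedes it below -/
import Mathlib

section
/- Let m be a natural number and let P_m, Q_m : ℝ² → ℝ be homogeneous polynomials of degree m. Define G : ℝ → ℝ by G(θ) = cos θ · Q_m(cos θ, sin θ) − sin θ · P_m(cos θ, sin θ). Then G(θ + π) = (−1)^{m+1} G(θ) for all θ, and if G is not identically zero, the set {θ ∈ [0, π) : G(θ) = 0} is finite with at most m + 1 elements. -/
/-!
`G(θ)` is the value of the binary form `F = x Q - y P`, homogeneous of degree `n = m + 1`, at
`(cos θ, sin θ)`; homogeneity under `(x, y) ↦ -(x, y)` gives the antiperiodicity. Writing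
`F = y ^ n p(x / y)` with `p = F(·, 1)` of degree at most `n`, a zero `θ ∈ (0, π)` of `G` yields the
root `cot θ` of `p`, and `cot` is injective on `(0, π)`; so there are at most `deg p` such zeros.
The remaining angle `θ = 0` is a zero exactly when `F(1, 0)`, the coefficient of `x ^ n` in `p`,
vanishes, and then `deg p < n`.
-/

open Set Real

theorem MvPolynomial.IsHomogeneous.eval_smul {σ R : Type*} [CommSemiring R]
    {F : MvPolynomial σ R} {n : ℕ} (hF : F.IsHomogeneous n) (c : R) (x : σ → R) :
    MvPolynomial.eval (c • x) F = c ^ n * MvPolynomial.eval x F := by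
  rw [F.as_sum, map_sum, map_sum, Finset.mul_sum]
  refine Finset.sum_congr rfl fun d hd => ?_
  rw [MvPolynomial.eval_monomial, MvPolynomial.eval_monomial,
    ← hF (MvPolynomial.mem_support_iff.mp hd)]
  simp only [Finsupp.prod, Finsupp.weight_apply, Finsupp.sum, Pi.smul_apply, smul_eq_mul,
    mul_pow, Finset.prod_mul_distrib, Finset.prod_pow_eq_pow_sum, Pi.one_apply, mul_one]
  ring

theorem MvPolynomial.IsHomogeneous.natDegree_aeval_X_one_le {R : Type*} [CommSemiring R]
    {F : MvPolynomial (Fin 2) R} {n : ℕ} (hF : F.IsHomogeneous n) :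
    (MvPolynomial.aeval ![(Polynomial.X : Polynomial R), 1] F).natDegree ≤ n := by
  rw [F.as_sum, map_sum]
  refine Polynomial.natDegree_sum_le_of_forall_le _ _ fun d hd => ?_
  have hdeg : d 0 + d 1 = n := by
    simp [hF.degree_eq_sum_deg_support hd, ← Finsupp.degree_apply, Finsupp.degree_eq_sum]
  simp only [MvPolynomial.aeval_monomial, Polynomial.algebraMap_eq, Finsupp.prod_pow,
    Fin.prod_univ_two, Matrix.cons_val_zero, Matrix.cons_val_one, Matrix.cons_val_fin_one, one_pow,
    mul_one]
  exact (Polynomial.natDegree_C_mul_X_pow_le _ _).trans (by omega)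

theorem MvPolynomial.IsHomogeneous.exists_homogenize_eq {R : Type*} [CommSemiring R]
    {F : MvPolynomial (Fin 2) R} {n : ℕ} (hF : F.IsHomogeneous n) :
    ∃ p : Polynomial R, p.natDegree ≤ n ∧ p.homogenize n = F :=
  ⟨_, hF.natDegree_aeval_X_one_le, Polynomial.homogenize_eq_of_isHomogeneous hF rfl⟩

theorem Polynomial.eval_one_zero_homogenize {R : Type*} [CommSemiring R] (p : Polynomial R)
    (n : ℕ) : MvPolynomial.eval ![1, 0] (p.homogenize n) = p.coeff n := by
  simp only [homogenize, Finset.Nat.sum_antidiagonal_eq_sum_range_succ_mk, Finset.sum_range_succ,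
    map_add, map_sum, MvPolynomial.eval_monomial, Finsupp.prod_pow, Fin.prod_univ_two,
    Finsupp.coe_update, Matrix.cons_val_zero, ne_eq, zero_ne_one, not_false_eq_true,
    Function.update_of_ne, Finsupp.single_eq_same, one_pow, Matrix.cons_val_one,
    Matrix.cons_val_fin_one, Function.update_self, one_mul, tsub_self, pow_zero, mul_one]
  rw [Finset.sum_eq_zero fun k hk => ?_, zero_add]
  rw [zero_pow (Nat.sub_ne_zero_of_lt (Finset.mem_range.mp hk)), mul_zero]

theorem Real.injOn_cot : InjOn cot (Ioo 0 π) := by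
  rintro a ⟨ha0, haπ⟩ b ⟨hb0, hbπ⟩ hab
  have hsa := sin_pos_of_pos_of_lt_pi ha0 haπ
  have hsb := sin_pos_of_pos_of_lt_pi hb0 hbπ
  rw [cot_eq_cos_div_sin, cot_eq_cos_div_sin, div_eq_div_iff hsa.ne' hsb.ne'] at hab
  have hsin : sin (a - b) = 0 := by rw [sin_sub]; linarith
  exact sub_eq_zero.mp ((sin_eq_zero_iff_of_lt_of_lt (by linarith) (by linarith)).mp hsin)

def MvPolynomial.angularZeros (F : MvPolynomial (Fin 2) ℝ) (s : Set ℝ) : Set ℝ :=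
  {θ ∈ s | MvPolynomial.eval ![cos θ, sin θ] F = 0}

open MvPolynomial (angularZeros)

namespace Polynomial

variable {p : ℝ[X]} {n : ℕ}

theorem cot_mem_rootSet_of_mem_angularZeros (hp : p ≠ 0) (hn : p.natDegree ≤ n) {θ : ℝ}
    (hθ : θ ∈ angularZeros (p.homogenize n) (Ioo 0 π)) : cot θ ∈ p.rootSet ℝ := by
  obtain ⟨⟨hθ0, hθπ⟩, hzero⟩ := hθ
  have hsin := (sin_pos_of_pos_of_lt_pi hθ0 hθπ).ne'
  rw [eval_homogenize hn _ hsin] at hzero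
  simp only [Matrix.cons_val_zero, Matrix.cons_val_one, mul_eq_zero, pow_eq_zero_iff',
    hsin, false_and, or_false] at hzero
  rw [mem_rootSet, coe_aeval_eq_eval, cot_eq_cos_div_sin]
  exact ⟨hp, hzero⟩

theorem angularZeros_homogenize_Ioo_finite_ncard_le (hp : p ≠ 0) (hn : p.natDegree ≤ n) :
    (angularZeros (p.homogenize n) (Ioo 0 π)).Finite ∧
      (angularZeros (p.homogenize n) (Ioo 0 π)).ncard ≤ p.natDegree := by
  have hmaps : MapsTo cot (angularZeros (p.homogenize n) (Ioo 0 π)) (p.rootSet ℝ) :=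
    fun _ hθ => cot_mem_rootSet_of_mem_angularZeros hp hn hθ
  have hinj : InjOn cot (angularZeros (p.homogenize n) (Ioo 0 π)) :=
    injOn_cot.mono (sep_subset _ _)
  exact ⟨.of_injOn hmaps hinj (p.rootSet_finite ℝ),
    (ncard_le_ncard_of_injOn cot hmaps hinj (p.rootSet_finite ℝ)).trans (p.ncard_rootSet_le ℝ)⟩

theorem angularZeros_homogenize_Ico_finite_ncard_le (hp : p ≠ 0) (hn : p.natDegree ≤ n) :
    (angularZeros (p.homogenize n) (Ico 0 π)).Finite ∧
      (angularZeros (p.homogenize n) (Ico 0 π)).ncard ≤ n := by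
  obtain ⟨hfin, hcard⟩ := angularZeros_homogenize_Ioo_finite_ncard_le hp hn
  set S := angularZeros (p.homogenize n) (Ico 0 π)
  set S' := angularZeros (p.homogenize n) (Ioo 0 π)
  have hsub : S ⊆ insert 0 S' := by
    rintro θ ⟨⟨h0, hπ⟩, hz⟩
    rcases h0.eq_or_lt with rfl | h
    · exact mem_insert 0 S'
    · exact mem_insert_of_mem 0 ⟨⟨h, hπ⟩, hz⟩
  refine ⟨(hfin.insert 0).subset hsub, ?_⟩
  by_cases hc : p.coeff n = 0
  · have hlt : p.natDegree < n :=
      hn.lt_of_ne fun h => hp (leadingCoeff_eq_zero.mp (by rwa [leadingCoeff, h]))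
    calc S.ncard ≤ (insert 0 S').ncard := ncard_le_ncard hsub (hfin.insert 0)
      _ ≤ S'.ncard + 1 := ncard_insert_le 0 S'
      _ ≤ n := by omega
  · have hsub' : S ⊆ S' := fun θ hθ => (hsub hθ).resolve_left <| by
      rintro rfl
      exact hc (by simpa [eval_one_zero_homogenize] using hθ.2)
    exact (ncard_le_ncard hsub' hfin).trans (hcard.trans hn)

end Polynomial

/-- Poincaré's criterion function `G(θ) = cos θ · Q_m(cos θ, sin θ) − sin θ · P_m(cos θ, sin θ)`
for homogeneous `P_m, Q_m` of degree `m` satisfies `G(θ + π) = (−1)^(m+1) G(θ)`, and if `G` is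
not identically zero, it has at most `m + 1` zeros in `[0, π)`. -/
theorem stmt0 (m : ℕ) (P Q : MvPolynomial (Fin 2) ℝ)
    (hP : P.IsHomogeneous m) (hQ : Q.IsHomogeneous m)
    (G : ℝ → ℝ)
    (hG : ∀ θ : ℝ, G θ =
      Real.cos θ * MvPolynomial.eval ![Real.cos θ, Real.sin θ] Q -
      Real.sin θ * MvPolynomial.eval ![Real.cos θ, Real.sin θ] P) :
    (∀ θ : ℝ, G (θ + Real.pi) = (-1 : ℝ) ^ (m + 1) * G θ) ∧
    ((¬ ∀ θ : ℝ, G θ = 0) →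
      {θ ∈ Set.Ico (0 : ℝ) Real.pi | G θ = 0}.Finite ∧
      {θ ∈ Set.Ico (0 : ℝ) Real.pi | G θ = 0}.ncard ≤ m + 1) := by
  set F : MvPolynomial (Fin 2) ℝ := .X 0 * Q - .X 1 * P
  have hF : F.IsHomogeneous (m + 1) := by
    rw [add_comm]
    exact ((MvPolynomial.isHomogeneous_X ℝ 0).mul hQ).sub
      ((MvPolynomial.isHomogeneous_X ℝ 1).mul hP)
  have hGF (θ : ℝ) : G θ = MvPolynomial.eval ![cos θ, sin θ] F := by simp [hG, F]
  refine ⟨fun θ => ?_, fun hG0 => ?_⟩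
  · rw [hGF, hGF, cos_add_pi, sin_add_pi, ← hF.eval_smul]
    simp
  · obtain ⟨p, hpn, hpF⟩ := hF.exists_homogenize_eq
    have hp : p ≠ 0 := by
      rintro rfl
      exact hG0 fun θ => by simp [hGF, ← hpF]
    simp only [hGF, ← hpF]
    exact p.angularZeros_homogenize_Ico_finite_ncard_le hp hpn
end

section
/- The degree-5 homogeneous components of the P4 vector field are P₅(x,y) = x(x² + y²)² and Q₅(x,y) = y(x² + y²)²; that is, P(x,y) − x(x² + y²)² and Q(x,y) − y(x² + y²)² are polynomials of total degree at most 3. Consequently X·Q₅(X,Y) − Y·P₅(X,Y) = 0 for all (X, Y) ∈ ℝ², so Poincaré's criterion for critical points at infinity is satisfied identically: contrary to Poincaré's claim of a limit cycle at infinity, every point of the equator of the Poincaré sphere is a critical point for P4. -/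
/-! With `r = x² + y²`, the system is `P = x(r - 1)(r - 9) - y(r - 2x - 8)` and
`Q = y(r - 1)(r - 9) + x(r - 2x - 8)`. Expanding `(r - 1)(r - 9) = r² - 10r + 9` shows that
`P - x r²` and `Q - y r²` have degree at most `1 + 2 = 3`, so the quintic parts are `x r²` and
`y r²`, which are proportional to `(x, y)`; hence `X·Q₅ - Y·P₅ = XY r² - YX r² = 0`. -/

namespace MvPolynomial

section CommSemiring

variable {σ R : Type*} [CommSemiring R] {p q : MvPolynomial σ R} {m n : ℕ}

theorem totalDegree_add_le_of_le (hp : p.totalDegree ≤ n) (hq : q.totalDegree ≤ n) :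
    (p + q).totalDegree ≤ n :=
  (totalDegree_add p q).trans (max_le hp hq)

theorem totalDegree_mul_le_of_le (hp : p.totalDegree ≤ m) (hq : q.totalDegree ≤ n) :
    (p * q).totalDegree ≤ m + n :=
  (totalDegree_mul p q).trans (add_le_add hp hq)

theorem totalDegree_ofNat (k : ℕ) [k.AtLeastTwo] :
    (ofNat(k) : MvPolynomial σ R).totalDegree = 0 := by
  rw [← map_ofNat C k]
  exact totalDegree_C _

end CommSemiring

section CommRing

variable {σ R : Type*} [CommRing R] {p q : MvPolynomial σ R} {n : ℕ}

theorem totalDegree_sub_le_of_le (hp : p.totalDegree ≤ n) (hq : q.totalDegree ≤ n) :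
    (p - q).totalDegree ≤ n :=
  (totalDegree_sub p q).trans (max_le hp hq)

theorem totalDegree_mul_sub_mul_sub_sub_mul_sq_le {u r a b : MvPolynomial σ R} {k d : ℕ}
    (hu : u.totalDegree ≤ k) (hr : r.totalDegree ≤ d)
    (ha : a.totalDegree = 0) (hb : b.totalDegree = 0) :
    (u * (r - a) * (r - b) - u * r ^ 2).totalDegree ≤ k + d := by
  have hab : (a * b).totalDegree ≤ d :=
    (totalDegree_mul_le_of_le ha.le hb.le).trans d.zero_le
  have habr : ((a + b) * r).totalDegree ≤ d :=
    (totalDegree_mul_le_of_le (totalDegree_add_le_of_le ha.le hb.le) hr).trans_eq (zero_add d)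
  rw [show u * (r - a) * (r - b) - u * r ^ 2 = u * (a * b - (a + b) * r) by ring]
  exact totalDegree_mul_le_of_le hu (totalDegree_sub_le_of_le hab habr)

end CommRing

end MvPolynomial

open MvPolynomial in
/-- The degree-5 homogeneous components of P4 are `P₅ = x(x²+y²)²` and `Q₅ = y(x²+y²)²`
(the differences have total degree ≤ 3), and `X·Q₅ − Y·P₅` vanishes identically, so
every point of the equator of the Poincaré sphere is a critical point of P4. -/
theorem stmt5 (X Y P Q : MvPolynomial (Fin 2) ℝ)
    (hX : X = MvPolynomial.X 0) (hY : Y = MvPolynomial.X 1)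
    (hP : P = X * (X^2 + Y^2 - 1) * (X^2 + Y^2 - 9) - Y * (X^2 + Y^2 - 2*X - 8))
    (hQ : Q = Y * (X^2 + Y^2 - 1) * (X^2 + Y^2 - 9) + X * (X^2 + Y^2 - 2*X - 8))
    (P₅ Q₅ : ℝ → ℝ → ℝ)
    (hP₅ : ∀ x y : ℝ, P₅ x y = x * (x^2 + y^2)^2)
    (hQ₅ : ∀ x y : ℝ, Q₅ x y = y * (x^2 + y^2)^2) :
    (P - X * (X^2 + Y^2)^2).totalDegree ≤ 3 ∧
    (Q - Y * (X^2 + Y^2)^2).totalDegree ≤ 3 ∧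
    (∀ x y : ℝ, x * Q₅ x y - y * P₅ x y = 0) := by
  have hXdeg : X.totalDegree ≤ 1 := hX ▸ (totalDegree_X 0).le
  have hYdeg : Y.totalDegree ≤ 1 := hY ▸ (totalDegree_X 1).le
  have hr : (X ^ 2 + Y ^ 2).totalDegree ≤ 2 := by
    rw [hX, hY]
    exact totalDegree_add_le_of_le (totalDegree_X_pow 0 2).le (totalDegree_X_pow 1 2).le
  have hℓ : (X ^ 2 + Y ^ 2 - 2 * X - 8).totalDegree ≤ 2 := by
    have h2X : (2 * X).totalDegree ≤ 2 :=
      (totalDegree_mul_le_of_le (totalDegree_ofNat 2).le hXdeg).trans (by norm_num)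
    exact totalDegree_sub_le_of_le (totalDegree_sub_le_of_le hr h2X)
      ((totalDegree_ofNat 8).trans_le (Nat.zero_le 2))
  have hquartic (u : MvPolynomial (Fin 2) ℝ) (hu : u.totalDegree ≤ 1) :
      (u * (X ^ 2 + Y ^ 2 - 1) * (X ^ 2 + Y ^ 2 - 9) - u * (X ^ 2 + Y ^ 2) ^ 2).totalDegree ≤ 3 :=
    totalDegree_mul_sub_mul_sub_sub_mul_sq_le hu hr totalDegree_one (totalDegree_ofNat 9)
  refine ⟨?_, ?_, fun x y => by rw [hP₅, hQ₅]; ring⟩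
  · refine le_of_eq_of_le (congrArg totalDegree ?_)
      (totalDegree_sub_le_of_le (hquartic X hXdeg) (totalDegree_mul_le_of_le hYdeg hℓ))
    rw [hP]
    ring
  · refine le_of_eq_of_le (congrArg totalDegree ?_)
      (totalDegree_add_le_of_le (hquartic Y hYdeg) (totalDegree_mul_le_of_le hXdeg hℓ))
    rw [hQ]
    ring
end

section
/- The set of zeros of the P4 vector field, i.e. the set of (x, y) ∈ ℝ² with P(x,y) = 0 and Q(x,y) = 0, is exactly the three-element set {(0, 0), (1/2, √35/2), (1/2, −√35/2)}. -/
/-- The zero set of the P4 vector field is exactly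
`{(0,0), (1/2, √35/2), (1/2, −√35/2)}`. -/
theorem stmt6 (P Q : ℝ → ℝ → ℝ)
    (hP : ∀ x y : ℝ, P x y = x * (x^2 + y^2 - 1) * (x^2 + y^2 - 9) - y * (x^2 + y^2 - 2*x - 8))
    (hQ : ∀ x y : ℝ, Q x y = y * (x^2 + y^2 - 1) * (x^2 + y^2 - 9) + x * (x^2 + y^2 - 2*x - 8)) :
    {p : ℝ × ℝ | P p.1 p.2 = 0 ∧ Q p.1 p.2 = 0} =
      {((0 : ℝ), (0 : ℝ)), (1/2, Real.sqrt 35 / 2), (1/2, -(Real.sqrt 35 / 2))} := by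
  have hs : Real.sqrt 35 ^ 2 = 35 := Real.sq_sqrt (by norm_num)
  ext ⟨x, y⟩
  simp only [Set.mem_setOf_eq, Set.mem_insert_iff, Set.mem_singleton_iff, Prod.mk.injEq,
    hP, hQ]
  constructor
  · rintro ⟨h1, h2⟩
    have e1 : (x^2 + y^2) * ((x^2 + y^2 - 1) * (x^2 + y^2 - 9)) = 0 := by linear_combination x * h1 + y * h2
    have e2 : (x^2 + y^2) * (x^2 + y^2 - 2*x - 8) = 0 := by linear_combination x * h2 - y * h1
    rcases mul_eq_zero.mp e1 with h0 | hf
    · left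
      constructor <;> nlinarith [sq_nonneg x, sq_nonneg y]
    · have h0 : x^2 + y^2 ≠ 0 := by
        intro hz
        rw [hz] at hf; norm_num at hf
      have e2' : x^2 + y^2 - 2*x - 8 = 0 := by
        rcases mul_eq_zero.mp e2 with h | h
        · exact absurd h h0
        · exact h
      rcases mul_eq_zero.mp hf with h | h
      · exfalso; nlinarith [sq_nonneg y, sq_nonneg (x+1)]
      · -- x^2+y^2 = 9, and 9 - 2x - 8 = 0 so x = 1/2
        have hx : x = 1/2 := by nlinarith
        have hy2 : y^2 = 35/4 := by nlinarith
        have : (y - Real.sqrt 35 / 2) * (y + Real.sqrt 35 / 2) = 0 := by nlinarith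
        rcases mul_eq_zero.mp this with h' | h'
        · right; left; exact ⟨hx, by linarith⟩
        · right; right; exact ⟨hx, by linarith⟩
  · rintro (⟨hx, hy⟩ | ⟨hx, hy⟩ | ⟨hx, hy⟩) <;> subst hx <;> subst hy
    · constructor <;> ring
    · constructor
      · linear_combination ((Real.sqrt 35 ^ 2 - 3) / 32 - Real.sqrt 35 / 8) * hs
      · linear_combination (Real.sqrt 35 * (Real.sqrt 35 ^ 2 - 3) / 32 + 1 / 8) * hs
    · constructor
      · linear_combination ((Real.sqrt 35 ^ 2 - 3) / 32 + Real.sqrt 35 / 8) * hs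
      · linear_combination (-(Real.sqrt 35 * (Real.sqrt 35 ^ 2 - 3)) / 32 + 1 / 8) * hs
end

section
/- Let W : ℝ² → ℝ be a polynomial function with W(x,y) > 0 for all (x, y) ∈ ℝ². Then the set of zeros of the R4-class vector field, i.e. the set of (x, y) ∈ ℝ² with P_W(x,y) = 0 and Q_W(x,y) = 0, is exactly the three-element set {(0, 0), (1/2, √35/2), (1/2, −√35/2)}. -/
/-- For any everywhere-positive polynomial `W`, the zero set of the R4-class vector field
is exactly `{(0,0), (1/2, √35/2), (1/2, −√35/2)}`. -/
theorem stmt7 (W : MvPolynomial (Fin 2) ℝ)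
    (hW : ∀ x y : ℝ, 0 < MvPolynomial.eval ![x, y] W)
    (P Q : ℝ → ℝ → ℝ)
    (hP : ∀ x y : ℝ, P x y = x * (x^2 + y^2 - 1) * (x^2 + y^2 - 9)
      - y * (x^2 + y^2 - 2*x - 8) * MvPolynomial.eval ![x, y] W)
    (hQ : ∀ x y : ℝ, Q x y = y * (x^2 + y^2 - 1) * (x^2 + y^2 - 9)
      + x * (x^2 + y^2 - 2*x - 8) * MvPolynomial.eval ![x, y] W) :
    {p : ℝ × ℝ | P p.1 p.2 = 0 ∧ Q p.1 p.2 = 0} =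
      {((0 : ℝ), (0 : ℝ)), (1/2, Real.sqrt 35 / 2), (1/2, -(Real.sqrt 35 / 2))} := by
  have hs : Real.sqrt 35 ^ 2 = 35 := Real.sq_sqrt (by norm_num)
  ext ⟨x, y⟩
  simp only [Set.mem_setOf_eq, Set.mem_insert_iff, Set.mem_singleton_iff, Prod.mk.injEq]
  constructor
  · rintro ⟨hp, hq⟩
    rw [hP] at hp; rw [hQ] at hq
    set w := MvPolynomial.eval ![x, y] W with hwdef
    have hw : 0 < w := hW x y
    have h1 : (x^2 + y^2) * ((x^2 + y^2 - 1) * (x^2 + y^2 - 9)) = 0 := by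
      linear_combination x * hp + y * hq
    have h2 : (x^2 + y^2) * ((x^2 + y^2 - 2*x - 8) * w) = 0 := by
      linear_combination x * hq - y * hp
    by_cases h0 : x^2 + y^2 = 0
    · left
      have hx2 : x^2 = 0 := by nlinarith [sq_nonneg y]
      have hy2 : y^2 = 0 := by nlinarith [sq_nonneg x]
      exact ⟨pow_eq_zero_iff two_ne_zero |>.mp hx2,
        pow_eq_zero_iff two_ne_zero |>.mp hy2⟩
    · right
      have h3 : (x^2 + y^2 - 1) * (x^2 + y^2 - 9) = 0 :=
        (mul_eq_zero.mp h1).resolve_left h0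
      have h4 : x^2 + y^2 - 2*x - 8 = 0 := by
        rcases mul_eq_zero.mp ((mul_eq_zero.mp h2).resolve_left h0) with h | h
        · exact h
        · exact absurd h (ne_of_gt hw)
      have h9 : x^2 + y^2 = 9 := by
        rcases mul_eq_zero.mp h3 with h | h
        · exfalso; nlinarith [sq_nonneg y]
        · linarith
      have hx : x = 1/2 := by linarith
      have hy2 : y^2 = 35/4 := by nlinarith
      have : (y - Real.sqrt 35 / 2) * (y + Real.sqrt 35 / 2) = 0 := by
        nlinarith
      rcases mul_eq_zero.mp this with h | h
      · left; exact ⟨hx, by linarith⟩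
      · right; exact ⟨hx, by linarith⟩
  · rintro (⟨hx, hy⟩ | ⟨hx, hy⟩ | ⟨hx, hy⟩) <;> subst hx <;> subst hy
    · constructor
      · rw [hP]; ring
      · rw [hQ]; ring
    · set w := MvPolynomial.eval ![(1:ℝ)/2, Real.sqrt 35 / 2] W with hwdef
      have h9 : ((1:ℝ)/2)^2 + (Real.sqrt 35 / 2)^2 - 9 = 0 := by
        linear_combination hs / 4
      constructor
      · rw [hP]
        linear_combination (1/2*((1/2)^2+(Real.sqrt 35/2)^2-1)
          - (Real.sqrt 35/2)*w) * h9
      · rw [hQ]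
        linear_combination ((Real.sqrt 35/2)*((1/2)^2+(Real.sqrt 35/2)^2-1)
          + (1/2)*w) * h9
    · set w := MvPolynomial.eval ![(1:ℝ)/2, -(Real.sqrt 35 / 2)] W with hwdef
      have h9 : ((1:ℝ)/2)^2 + (Real.sqrt 35 / 2)^2 - 9 = 0 := by
        linear_combination hs / 4
      constructor
      · rw [hP]
        linear_combination (1/2*((1/2)^2+(Real.sqrt 35/2)^2-1)
          + (Real.sqrt 35/2)*w) * h9
      · rw [hQ]
        linear_combination (-(Real.sqrt 35/2)*((1/2)^2+(Real.sqrt 35/2)^2-1)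
          + (1/2)*w) * h9
end

section
/- Let W : ℝ² → ℝ be a polynomial function with W(x,y) > 0 for all (x, y) ∈ ℝ². Then the Jacobian matrix of the R4-class vector field (P_W, Q_W) at the point B = (1/2, −√35/2) has determinant Δ = −144·√35·W(1/2, −√35/2), which is strictly negative; hence B is a saddle point. -/
/-!
Write the R4 field as `P = x F - y W G`, `Q = y F + x W G` with `F = (r² - 1)(r² - 9)` and
`G = r² - 2x - 8`. The point `B` lies on both circles `F = 0` and `G = 0`, so at `B` no derivative
of `W` survives, and the Jacobian determinant collapses to `W · r² · (F_x G_y - F_y G_x)`.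
For the R4 field `F_x G_y - F_y G_x = 8 y (r² - 5)`, which at `B` (where `r² = 9`) is `-16√35`.
-/

open MvPolynomial

theorem DifferentiableAt.hasDerivAt_mul_of_eq_zero {𝕜 : Type*} [NontriviallyNormedField 𝕜]
    {h g : 𝕜 → 𝕜} {g' t : 𝕜} (hh : DifferentiableAt 𝕜 h t) (hg : HasDerivAt g g' t) (h0 : g t = 0) :
    HasDerivAt (fun s => h s * g s) (h t * g') t := by
  simpa [h0] using hh.hasDerivAt.fun_mul hg

theorem MvPolynomial.differentiable_eval_comp {𝕜 σ : Type*} [NontriviallyNormedField 𝕜]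
    [CompleteSpace 𝕜] [Fintype σ] (p : MvPolynomial σ 𝕜) {f : 𝕜 → σ → 𝕜}
    (hf : Differentiable 𝕜 f) : Differentiable 𝕜 (fun t => eval (f t) p) :=
  fun t => ((AnalyticOnNhd.eval_mvPolynomial p) (f t) trivial).differentiableAt.comp t (hf t)

theorem MvPolynomial.differentiable_eval_vec_left (p : MvPolynomial (Fin 2) ℝ) (b : ℝ) :
    Differentiable ℝ (fun x => eval ![x, b] p) :=
  p.differentiable_eval_comp <|
    differentiable_pi.2 <| Fin.forall_fin_two.2 ⟨differentiable_id, differentiable_const b⟩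

theorem MvPolynomial.differentiable_eval_vec_right (p : MvPolynomial (Fin 2) ℝ) (a : ℝ) :
    Differentiable ℝ (fun y => eval ![a, y] p) :=
  p.differentiable_eval_comp <|
    differentiable_pi.2 <| Fin.forall_fin_two.2 ⟨differentiable_const a, differentiable_id⟩

theorem rotated_field_jacobian_det_of_common_zero {F G W P Q : ℝ → ℝ → ℝ} {a b Fx Fy Gx Gy : ℝ}
    (hP : ∀ x y, P x y = x * F x y - y * W x y * G x y)
    (hQ : ∀ x y, Q x y = y * F x y + x * W x y * G x y)
    (hFx : HasDerivAt (fun x => F x b) Fx a) (hFy : HasDerivAt (fun y => F a y) Fy b)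
    (hGx : HasDerivAt (fun x => G x b) Gx a) (hGy : HasDerivAt (fun y => G a y) Gy b)
    (hWx : DifferentiableAt ℝ (fun x => W x b) a) (hWy : DifferentiableAt ℝ (fun y => W a y) b)
    (hF : F a b = 0) (hG : G a b = 0) :
    deriv (fun x => P x b) a * deriv (fun y => Q a y) b
        - deriv (fun y => P a y) b * deriv (fun x => Q x b) a
      = W a b * (a ^ 2 + b ^ 2) * (Fx * Gy - Fy * Gx) := by
  have hPx : HasDerivAt (fun x => P x b) (a * Fx - b * W a b * Gx) a := by
    simp only [hP]
    exact (differentiableAt_id.hasDerivAt_mul_of_eq_zero hFx hF).sub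
      (((differentiableAt_const b).mul hWx).hasDerivAt_mul_of_eq_zero hGx hG)
  have hPy : HasDerivAt (fun y => P a y) (a * Fy - b * W a b * Gy) b := by
    simp only [hP]
    exact ((differentiableAt_const a).hasDerivAt_mul_of_eq_zero hFy hF).sub
      ((differentiableAt_id.mul hWy).hasDerivAt_mul_of_eq_zero hGy hG)
  have hQx : HasDerivAt (fun x => Q x b) (b * Fx + a * W a b * Gx) a := by
    simp only [hQ]
    exact ((differentiableAt_const b).hasDerivAt_mul_of_eq_zero hFx hF).add
      ((differentiableAt_id.mul hWx).hasDerivAt_mul_of_eq_zero hGx hG)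
  have hQy : HasDerivAt (fun y => Q a y) (b * Fy + a * W a b * Gy) b := by
    simp only [hQ]
    exact (differentiableAt_id.hasDerivAt_mul_of_eq_zero hFy hF).add
      (((differentiableAt_const a).mul hWy).hasDerivAt_mul_of_eq_zero hGy hG)
  rw [hPx.deriv, hPy.deriv, hQx.deriv, hQy.deriv]
  ring

theorem r4_jacobian_det_of_common_zero {W P Q : ℝ → ℝ → ℝ} {a b : ℝ}
    (hP : ∀ x y, P x y = x * (x^2 + y^2 - 1) * (x^2 + y^2 - 9)
      - y * (x^2 + y^2 - 2*x - 8) * W x y)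
    (hQ : ∀ x y, Q x y = y * (x^2 + y^2 - 1) * (x^2 + y^2 - 9)
      + x * (x^2 + y^2 - 2*x - 8) * W x y)
    (hWx : DifferentiableAt ℝ (fun x => W x b) a) (hWy : DifferentiableAt ℝ (fun y => W a y) b)
    (hF : (a^2 + b^2 - 1) * (a^2 + b^2 - 9) = 0) (hG : a^2 + b^2 - 2*a - 8 = 0) :
    deriv (fun x => P x b) a * deriv (fun y => Q a y) b
        - deriv (fun y => P a y) b * deriv (fun x => Q x b) a
      = 8 * W a b * (a^2 + b^2) * b * (a^2 + b^2 - 5) := by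
  have hFx : HasDerivAt (fun x => (x^2 + b^2 - 1) * (x^2 + b^2 - 9))
      (4 * a * (a^2 + b^2 - 5)) a :=
    ((((hasDerivAt_pow 2 a).add_const (b^2)).sub_const 1).fun_mul
      (((hasDerivAt_pow 2 a).add_const (b^2)).sub_const 9)).congr_deriv (by ring)
  have hFy : HasDerivAt (fun y => (a^2 + y^2 - 1) * (a^2 + y^2 - 9))
      (4 * b * (a^2 + b^2 - 5)) b :=
    ((((hasDerivAt_pow 2 b).const_add (a^2)).sub_const 1).fun_mul
      (((hasDerivAt_pow 2 b).const_add (a^2)).sub_const 9)).congr_deriv (by ring)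
  have hGx : HasDerivAt (fun x => x^2 + b^2 - 2*x - 8) (2 * a - 2) a :=
    ((((hasDerivAt_pow 2 a).add_const (b^2)).sub
      ((hasDerivAt_id a).const_mul 2)).sub_const 8).congr_deriv (by simp)
  have hGy : HasDerivAt (fun y => a^2 + y^2 - 2*a - 8) (2 * b) b :=
    (((hasDerivAt_pow 2 b).const_add (a^2)).sub_const (2*a)).sub_const 8 |>.congr_deriv (by simp)
  rw [rotated_field_jacobian_det_of_common_zero
    (F := fun x y => (x^2 + y^2 - 1) * (x^2 + y^2 - 9)) (G := fun x y => x^2 + y^2 - 2*x - 8)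
    (fun x y => by rw [hP]; ring)
    (fun x y => by rw [hQ]; ring) hFx hFy hGx hGy hWx hWy hF hG]
  ring

/-- For any everywhere-positive polynomial `W`, the Jacobian of the R4-class vector field at
`B = (1/2, −√35/2)` has determinant `Δ = −144·√35·W(B) < 0`: `B` is a saddle. -/
theorem stmt9 (W : MvPolynomial (Fin 2) ℝ)
    (hW : ∀ x y : ℝ, 0 < MvPolynomial.eval ![x, y] W)
    (P Q : ℝ → ℝ → ℝ)
    (hP : ∀ x y : ℝ, P x y = x * (x^2 + y^2 - 1) * (x^2 + y^2 - 9)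
      - y * (x^2 + y^2 - 2*x - 8) * MvPolynomial.eval ![x, y] W)
    (hQ : ∀ x y : ℝ, Q x y = y * (x^2 + y^2 - 1) * (x^2 + y^2 - 9)
      + x * (x^2 + y^2 - 2*x - 8) * MvPolynomial.eval ![x, y] W)
    (b₁ b₂ : ℝ) (hb₁ : b₁ = 1/2) (hb₂ : b₂ = -(Real.sqrt 35 / 2))
    (Δ : ℝ)
    (hΔ : Δ = deriv (fun x : ℝ => P x b₂) b₁ * deriv (fun y : ℝ => Q b₁ y) b₂
      - deriv (fun y : ℝ => P b₁ y) b₂ * deriv (fun x : ℝ => Q x b₂) b₁) :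
    Δ = -144 * Real.sqrt 35 * MvPolynomial.eval ![b₁, b₂] W ∧ Δ < 0 := by
  have hB : b₁^2 + b₂^2 = 9 := by
    rw [hb₁, hb₂, neg_sq, div_pow (Real.sqrt 35), Real.sq_sqrt (by norm_num)]
    norm_num
  have hΔB : Δ = -144 * Real.sqrt 35 * MvPolynomial.eval ![b₁, b₂] W := by
    rw [hΔ, r4_jacobian_det_of_common_zero (W := fun x y => MvPolynomial.eval ![x, y] W) hP hQ
      (W.differentiable_eval_vec_left b₂ b₁) (W.differentiable_eval_vec_right b₁ b₂)
      (by rw [hB]; ring) (by rw [hB, hb₁]; ring), hB, hb₂]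
    ring
  refine ⟨hΔB, hΔB ▸ mul_neg_of_neg_of_pos ?_ (hW b₁ b₂)⟩
  have : 0 < Real.sqrt 35 := Real.sqrt_pos.2 (by norm_num)
  linarith
end

section
/- Let W : ℝ² → ℝ be a polynomial function, let ρ ∈ {1, 3}, and let f : ℝ → ℝ² be a differentiable function satisfying f′(t) = (P_W(f(t)), Q_W(f(t))) for all t ∈ ℝ. If ‖f(0)‖ = ρ (Euclidean norm), then ‖f(t)‖ = ρ for all t ∈ ℝ; that is, the circles of radius 1 and radius 3 centered at the origin are invariant under the flow of the R4-class system. -/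
/-!
Along a solution, `r² = x² + y²` obeys `(r²)' = 2 (x P + y Q) = 2 r² (r² - 1) (r² - 9)`, the `W`-terms
cancelling. For `ρ ∈ {1, 3}` this right-hand side vanishes at `r² = ρ²`, so `g = r² - ρ²` solves a
scalar linear equation `g' = c(t) g` with continuous `c`; since `g(0) = 0`, uniqueness gives `g ≡ 0`.
-/

/-- The integrating factor `exp (-∫ c)` turns `g` into a constant, hence into `g t₀ = 0`. -/
theorem eq_zero_of_hasDerivAt_eq_smul {E : Type*} [NormedAddCommGroup E] [NormedSpace ℝ E]
    {g : ℝ → E} {c : ℝ → ℝ} (hc : Continuous c) (hg : ∀ t, HasDerivAt g (c t • g t) t)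
    {t₀ : ℝ} (h₀ : g t₀ = 0) (t : ℝ) : g t = 0 := by
  set C : ℝ → ℝ := fun s => ∫ u in t₀..s, c u
  have hC : ∀ s, HasDerivAt C (c s) s := fun s =>
    (hc.integral_hasStrictDerivAt t₀ s).hasDerivAt
  have hderiv : ∀ s, HasDerivAt (fun s => Real.exp (-C s) • g s) 0 s := by
    intro s
    have hzero : Real.exp (-C s) • c s • g s + (Real.exp (-C s) * -c s) • g s = 0 := by
      rw [smul_smul, ← add_smul]
      exact smul_eq_zero_of_left (by ring) _
    exact (((hC s).neg.exp.smul (hg s)).congr_deriv hzero :)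
  have hconst := is_const_of_deriv_eq_zero (fun s => (hderiv s).differentiableAt)
    (fun s => (hderiv s).deriv) t t₀
  simp only [h₀, smul_zero] at hconst
  exact (smul_eq_zero.mp hconst).resolve_left (Real.exp_pos _).ne'

theorem HasDerivAt.fst_sq_add_snd_sq {f : ℝ → ℝ × ℝ} {u v t : ℝ} (hf : HasDerivAt f (u, v) t) :
    HasDerivAt (fun t => (f t).1 ^ 2 + (f t).2 ^ 2) (2 * ((f t).1 * u + (f t).2 * v)) t := by
  have hx : HasDerivAt (fun t => (f t).1) u t := (hasFDerivAt_fst.comp_hasDerivAt t hf :)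
  have hy : HasDerivAt (fun t => (f t).2) v t := (hasFDerivAt_snd.comp_hasDerivAt t hf :)
  refine ((hx.pow 2).add (hy.pow 2)).congr_deriv ?_
  push_cast
  ring

theorem exists_continuous_factor_of_radius {ρ : ℝ} (hρ : ρ = 1 ∨ ρ = 3) :
    ∃ q : ℝ → ℝ, Continuous q ∧ ∀ s, 2 * s * (s - 1) * (s - 9) = q s * (s - ρ ^ 2) := by
  rcases hρ with rfl | rfl
  · exact ⟨fun s => 2 * s * (s - 9), by fun_prop, fun s => by ring⟩
  · exact ⟨fun s => 2 * s * (s - 1), by fun_prop, fun s => by ring⟩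

/-- For any polynomial `W`, the circles of radius 1 and 3 centered at the origin are invariant
under the flow of the R4-class system: a solution starting on such a circle stays on it. -/
theorem stmt12 (W : MvPolynomial (Fin 2) ℝ)
    (P Q : ℝ → ℝ → ℝ)
    (hP : ∀ x y : ℝ, P x y = x * (x^2 + y^2 - 1) * (x^2 + y^2 - 9)
      - y * (x^2 + y^2 - 2*x - 8) * MvPolynomial.eval ![x, y] W)
    (hQ : ∀ x y : ℝ, Q x y = y * (x^2 + y^2 - 1) * (x^2 + y^2 - 9)
      + x * (x^2 + y^2 - 2*x - 8) * MvPolynomial.eval ![x, y] W)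
    (ρ : ℝ) (hρ : ρ = 1 ∨ ρ = 3)
    (f : ℝ → ℝ × ℝ)
    (hf : ∀ t : ℝ, HasDerivAt f (P (f t).1 (f t).2, Q (f t).1 (f t).2) t)
    (h0 : Real.sqrt ((f 0).1 ^ 2 + (f 0).2 ^ 2) = ρ) :
    ∀ t : ℝ, Real.sqrt ((f t).1 ^ 2 + (f t).2 ^ 2) = ρ := by
  have hρ0 : 0 ≤ ρ := by rcases hρ with rfl | rfl <;> norm_num
  have hsqrt : ∀ t, Real.sqrt ((f t).1 ^ 2 + (f t).2 ^ 2) = ρ ↔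
      (f t).1 ^ 2 + (f t).2 ^ 2 - ρ ^ 2 = 0 := fun t => by
    rw [Real.sqrt_eq_iff_eq_sq (by positivity) hρ0, sub_eq_zero]
  obtain ⟨q, hq, hfactor⟩ := exists_continuous_factor_of_radius hρ
  have hg : ∀ t, HasDerivAt (fun t => (f t).1 ^ 2 + (f t).2 ^ 2 - ρ ^ 2)
      (q ((f t).1 ^ 2 + (f t).2 ^ 2) * ((f t).1 ^ 2 + (f t).2 ^ 2 - ρ ^ 2)) t := by
    intro t
    refine ((hf t).fst_sq_add_snd_sq.sub_const (ρ ^ 2)).congr_deriv ?_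
    rw [← hfactor, hP, hQ]
    ring
  have hfc : Continuous f := continuous_iff_continuousAt.mpr fun t => (hf t).continuousAt
  exact fun t => (hsqrt t).mpr <| eq_zero_of_hasDerivAt_eq_smul (by fun_prop) hg
    ((hsqrt 0).mp h0) t
end

section
/- Let W : ℝ² → ℝ be a polynomial function with W(x,y) > 0 for all (x, y) ∈ ℝ². Then for every (x, y) with x² + y² = 9 one has x·Q_W(x,y) − y·P_W(x,y) = 9(1 − 2x)·W(x,y); in particular this quantity is strictly positive when x < 1/2, strictly negative when x > 1/2, and zero exactly at the two points A = (1/2, √35/2) and B = (1/2, −√35/2). -/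
/-- On the invariant circle `x² + y² = 9` of the R4-class system (with everywhere-positive
polynomial `W`), one has `x·Q_W − y·P_W = 9(1−2x)·W`, strictly positive for `x < 1/2`,
strictly negative for `x > 1/2`, and vanishing exactly at `A = (1/2, √35/2)` and
`B = (1/2, −√35/2)`. -/
theorem stmt13 (W : MvPolynomial (Fin 2) ℝ)
    (hW : ∀ x y : ℝ, 0 < MvPolynomial.eval ![x, y] W)
    (P Q : ℝ → ℝ → ℝ)
    (hP : ∀ x y : ℝ, P x y = x * (x^2 + y^2 - 1) * (x^2 + y^2 - 9)
      - y * (x^2 + y^2 - 2*x - 8) * MvPolynomial.eval ![x, y] W)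
    (hQ : ∀ x y : ℝ, Q x y = y * (x^2 + y^2 - 1) * (x^2 + y^2 - 9)
      + x * (x^2 + y^2 - 2*x - 8) * MvPolynomial.eval ![x, y] W) :
    ∀ x y : ℝ, x^2 + y^2 = 9 →
      (x * Q x y - y * P x y = 9 * (1 - 2*x) * MvPolynomial.eval ![x, y] W) ∧
      (x < 1/2 → 0 < x * Q x y - y * P x y) ∧
      (1/2 < x → x * Q x y - y * P x y < 0) ∧
      (x * Q x y - y * P x y = 0 ↔
        ((x, y) = ((1/2 : ℝ), Real.sqrt 35 / 2) ∨ (x, y) = ((1/2 : ℝ), -(Real.sqrt 35 / 2)))) := by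
  intro x y hc
  have hw := hW x y
  set w := MvPolynomial.eval ![x, y] W with hwdef
  have key : x * Q x y - y * P x y = 9 * (1 - 2*x) * w := by
    rw [hP, hQ]
    linear_combination ((x^2 + y^2) + 1 - 2*x) * w * hc
  refine ⟨key, ?_, ?_, ?_⟩
  · intro hx
    rw [key]
    have : 0 < 1 - 2*x := by linarith
    positivity
  · intro hx
    rw [key]
    have h1 : 1 - 2*x < 0 := by linarith
    nlinarith
  · rw [key]
    constructor
    · intro h
      have hx : x = 1/2 := by
        rcases mul_eq_zero.1 h with h' | h'
        · rcases mul_eq_zero.1 h' with h'' | h''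
          · norm_num at h''
          · linarith
        · exact absurd h' (ne_of_gt hw)
      have hy2 : y^2 = 35/4 := by
        rw [hx] at hc; nlinarith
      have hs : Real.sqrt 35 / 2 = Real.sqrt (35/4) := by
        rw [show (35:ℝ)/4 = 35/(2^2) by norm_num, Real.sqrt_div' , Real.sqrt_sq] <;> norm_num
      have habs : |y| = Real.sqrt 35 / 2 := by
        rw [hs, ← Real.sqrt_sq_eq_abs, hy2]
      rcases abs_eq (show (0:ℝ) ≤ Real.sqrt 35 / 2 by positivity) |>.1 habs with h | h
      · left; rw [hx, h]
      · right; rw [hx, h]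
    · intro h
      rcases h with h | h <;>
        · have hx : x = 1/2 := by
            have := congrArg Prod.fst h; simpa using this
          rw [hx]; ring
end

section
/- Let W : ℝ² → ℝ be a polynomial of degree N ≥ 2 whose degree-N homogeneous component W_N is positive definite (W_N(x,y) > 0 for all (x,y) ≠ (0,0)). Then the polynomial x·Q_W(x,y) − y·P_W(x,y) has total degree N + 4, its degree-(N+4) homogeneous component equals (x² + y²)²·W_N(x,y), and this component is strictly positive at every point of the unit circle x² + y² = 1. -/
open MvPolynomial

/-- If `W` is a polynomial of degree `N ≥ 2` whose degree-`N` homogeneous component `W_N` is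
positive definite, then `X·Q_W − Y·P_W` has total degree `N + 4`, its degree-`(N+4)`
homogeneous component is `(X²+Y²)²·W_N`, and that component is strictly positive on the unit
circle. -/
theorem stmt14 (N : ℕ) (hN : 2 ≤ N)
    (W : MvPolynomial (Fin 2) ℝ) (hWdeg : W.totalDegree = N)
    (hWN : ∀ x y : ℝ, (x, y) ≠ ((0 : ℝ), (0 : ℝ)) →
      0 < MvPolynomial.eval ![x, y] (MvPolynomial.homogeneousComponent N W))
    (X Y P Q F : MvPolynomial (Fin 2) ℝ)
    (hX : X = MvPolynomial.X 0) (hY : Y = MvPolynomial.X 1)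
    (hP : P = X * (X^2 + Y^2 - 1) * (X^2 + Y^2 - 9) - Y * (X^2 + Y^2 - 2*X - 8) * W)
    (hQ : Q = Y * (X^2 + Y^2 - 1) * (X^2 + Y^2 - 9) + X * (X^2 + Y^2 - 2*X - 8) * W)
    (hF : F = X * Q - Y * P) :
    F.totalDegree = N + 4 ∧
    MvPolynomial.homogeneousComponent (N + 4) F
      = (X^2 + Y^2)^2 * MvPolynomial.homogeneousComponent N W ∧
    (∀ x y : ℝ, x^2 + y^2 = 1 →
      0 < MvPolynomial.eval ![x, y] (MvPolynomial.homogeneousComponent (N + 4) F)) := by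
  set S : MvPolynomial (Fin 2) ℝ := X^2 + Y^2 with hS
  have hFeq : F = S^2 * W - (2*X + 8) * (S * W) := by
    subst hF hP hQ; rw [hS]; ring
  have hShom : S.IsHomogeneous 2 := by
    rw [hS, hX, hY]
    exact ((isHomogeneous_X _ _).pow 2).add ((isHomogeneous_X _ _).pow 2)
  have hS2hom : (S^2).IsHomogeneous 4 := hShom.pow 2
  -- total degree bounds
  have hdegS : S.totalDegree ≤ 2 := hShom.totalDegree_le
  have hdeg2X8 : (2*X + 8 : MvPolynomial (Fin 2) ℝ).totalDegree ≤ 1 := by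
    refine (totalDegree_add _ _).trans (max_le ?_ ?_)
    · refine (totalDegree_mul _ _).trans ?_
      have h2 : (2 : MvPolynomial (Fin 2) ℝ) = C 2 := (map_ofNat C 2).symm
      rw [h2, totalDegree_C, hX, totalDegree_X]
    · have h8 : (8 : MvPolynomial (Fin 2) ℝ) = C 8 := (map_ofNat C 8).symm
      rw [h8, totalDegree_C]; omega
  -- the key component computation
  have hcomp : homogeneousComponent (N + 4) F
      = S^2 * homogeneousComponent N W := by
    rw [hFeq, map_sub]
    have h2 : homogeneousComponent (N + 4) ((2*X + 8) * (S * W)) = 0 := by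
      apply homogeneousComponent_eq_zero
      calc ((2*X + 8) * (S * W)).totalDegree
          ≤ (2*X+8).totalDegree + (S*W).totalDegree := totalDegree_mul _ _
        _ ≤ 1 + (S.totalDegree + W.totalDegree) :=
            add_le_add hdeg2X8 (totalDegree_mul _ _)
        _ ≤ 1 + (2 + N) := by rw [hWdeg]; omega
        _ < N + 4 := by omega
    rw [h2, sub_zero]
    -- decompose W into homogeneous components
    conv_lhs => rw [← sum_homogeneousComponent W, hWdeg, Finset.mul_sum, map_sum]
    rw [Finset.sum_eq_single N]
    · have hmem : (S^2 * homogeneousComponent N W) ∈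
          homogeneousSubmodule (Fin 2) ℝ (N + 4) := by
        rw [mem_homogeneousSubmodule]
        have := hS2hom.mul (homogeneousComponent_isHomogeneous N W)
        rwa [add_comm 4 N] at this
      rw [homogeneousComponent_of_mem hmem, if_pos rfl]
    · intro i hi hiN
      apply homogeneousComponent_eq_zero
      have h1 : (homogeneousComponent i W).totalDegree ≤ i :=
        (homogeneousComponent_isHomogeneous i W).totalDegree_le
      have h2 : i < N + 1 := Finset.mem_range.mp hi
      calc (S^2 * homogeneousComponent i W).totalDegree
          ≤ (S^2).totalDegree + i := by
            exact (totalDegree_mul _ _).trans (add_le_add le_rfl h1)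
        _ ≤ 4 + i := by exact add_le_add hS2hom.totalDegree_le le_rfl
        _ < N + 4 := by omega
    · intro h; exact absurd (Finset.self_mem_range_succ N) h
  have heval : ∀ x y : ℝ, MvPolynomial.eval ![x, y] (homogeneousComponent (N + 4) F)
      = (x^2 + y^2)^2 * MvPolynomial.eval ![x, y] (homogeneousComponent N W) := by
    intro x y
    rw [hcomp, map_mul, hS, hX, hY]
    simp
  have hpos : ∀ x y : ℝ, x^2 + y^2 = 1 →
      0 < MvPolynomial.eval ![x, y] (homogeneousComponent (N + 4) F) := by
    intro x y hxy
    rw [heval, hxy, one_pow, one_mul]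
    apply hWN
    intro h
    rw [Prod.mk.injEq] at h
    rw [h.1, h.2] at hxy; norm_num at hxy
  refine ⟨?_, hcomp, hpos⟩
  -- total degree
  have hub : F.totalDegree ≤ N + 4 := by
    rw [hFeq]
    refine (totalDegree_sub _ _).trans (max_le ?_ ?_)
    · calc (S^2 * W).totalDegree ≤ (S^2).totalDegree + W.totalDegree := totalDegree_mul _ _
        _ ≤ 4 + N := by rw [hWdeg]; exact add_le_add hS2hom.totalDegree_le le_rfl
        _ = N + 4 := by omega
    · calc ((2*X + 8) * (S * W)).totalDegree
          ≤ (2*X+8).totalDegree + (S*W).totalDegree := totalDegree_mul _ _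
        _ ≤ 1 + (S.totalDegree + W.totalDegree) :=
            add_le_add hdeg2X8 (totalDegree_mul _ _)
        _ ≤ N + 4 := by rw [hWdeg]; omega
  refine le_antisymm hub ?_
  by_contra hlt
  push_neg at hlt
  have := homogeneousComponent_eq_zero _ F hlt
  have hp := hpos 1 0 (by norm_num)
  rw [this] at hp
  simp at hp
end

section
/- For every c ∈ ℝ, the degree-7 homogeneous components of the P5 vector field are P₇(x,y) = 2x(x² + y²)³ and Q₇(x,y) = 2y(x² + y²)³; that is, P(x,y) − 2x(x² + y²)³ and Q(x,y) − 2y(x² + y²)³ are polynomials of total degree at most 5. Consequently X·Q₇(X,Y) − Y·P₇(X,Y) = 0 for all (X, Y) ∈ ℝ², so Poincaré's criterion for critical points at infinity is satisfied identically: contrary to Poincaré's claim of a limit cycle at infinity, every point of the equator of the Poincaré sphere is a critical point for P5. -/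
open MvPolynomial

section
variable {σ R : Type*} [CommRing R]

lemma td_sub' (p q : MvPolynomial σ R) {n : ℕ} (hp : p.totalDegree ≤ n)
    (hq : q.totalDegree ≤ n) : (p - q).totalDegree ≤ n := by
  rw [sub_eq_add_neg]
  exact le_trans (totalDegree_add _ _) (by simp [totalDegree_neg, hp, hq])

lemma td_add' (p q : MvPolynomial σ R) {n : ℕ} (hp : p.totalDegree ≤ n)
    (hq : q.totalDegree ≤ n) : (p + q).totalDegree ≤ n :=
  le_trans (totalDegree_add _ _) (by simp [hp, hq])

lemma td_mul' (p q : MvPolynomial σ R) {a b n : ℕ} (hp : p.totalDegree ≤ a)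
    (hq : q.totalDegree ≤ b) (h : a + b ≤ n) : (p * q).totalDegree ≤ n :=
  le_trans (totalDegree_mul _ _) (le_trans (add_le_add hp hq) h)

lemma td_pow' (p : MvPolynomial σ R) {a k n : ℕ} (hp : p.totalDegree ≤ a)
    (h : k * a ≤ n) : (p ^ k).totalDegree ≤ n :=
  le_trans (totalDegree_pow _ _) (le_trans (Nat.mul_le_mul_left k hp) h)

end

/-- For every `c`, the degree-7 homogeneous components of P5 are `P₇ = 2x(x²+y²)³` and
`Q₇ = 2y(x²+y²)³` (the differences have total degree ≤ 5), and `X·Q₇ − Y·P₇` vanishes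
identically, so every point of the equator of the Poincaré sphere is a critical point of P5. -/
theorem stmt15 (c : ℝ) (X Y P Q : MvPolynomial (Fin 2) ℝ)
    (hX : X = MvPolynomial.X 0) (hY : Y = MvPolynomial.X 1)
    (hP : P = X * (2*X^2 + 2*Y^2 + 1) * ((X^2 + Y^2)^2 + X^2 - Y^2 - MvPolynomial.C c)
      - Y * (2*X^2 + 2*Y^2 - 1))
    (hQ : Q = Y * (2*X^2 + 2*Y^2 - 1) * ((X^2 + Y^2)^2 + X^2 - Y^2 - MvPolynomial.C c)
      + X * (2*X^2 + 2*Y^2 + 1))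
    (P₇ Q₇ : ℝ → ℝ → ℝ)
    (hP₇ : ∀ x y : ℝ, P₇ x y = 2 * x * (x^2 + y^2)^3)
    (hQ₇ : ∀ x y : ℝ, Q₇ x y = 2 * y * (x^2 + y^2)^3) :
    (P - 2 * X * (X^2 + Y^2)^3).totalDegree ≤ 5 ∧
    (Q - 2 * Y * (X^2 + Y^2)^3).totalDegree ≤ 5 ∧
    (∀ x y : ℝ, x * Q₇ x y - y * P₇ x y = 0) := by
  have hXd : X.totalDegree ≤ 1 := by rw [hX]; exact (totalDegree_X _).le
  have hYd : Y.totalDegree ≤ 1 := by rw [hY]; exact (totalDegree_X _).le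
  have h2 : (2 : MvPolynomial (Fin 2) ℝ).totalDegree ≤ 0 := by
    have h : (2 : MvPolynomial (Fin 2) ℝ) = MvPolynomial.C 2 := (map_ofNat _ 2).symm
    rw [h, totalDegree_C]
  have h1 : (1 : MvPolynomial (Fin 2) ℝ).totalDegree ≤ 0 := by
    rw [totalDegree_one]
  have hCc : (MvPolynomial.C c : MvPolynomial (Fin 2) ℝ).totalDegree ≤ 0 := by
    rw [totalDegree_C]
  have hr : (X^2 + Y^2).totalDegree ≤ 2 :=
    td_add' _ _ (td_pow' _ hXd (by norm_num)) (td_pow' _ hYd (by norm_num))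
  have hlin : (2*(X^2+Y^2)).totalDegree ≤ 2 := td_mul' _ _ h2 hr (by norm_num)
  have hq2 : (X^2 - Y^2 - MvPolynomial.C c).totalDegree ≤ 2 :=
    td_sub' _ _ (td_sub' _ _ (td_pow' _ hXd (by norm_num)) (td_pow' _ hYd (by norm_num)))
      (le_trans hCc (by norm_num))
  refine ⟨?_, ?_, ?_⟩
  · have hE : P - 2 * X * (X^2 + Y^2)^3
        = X * ((X^2+Y^2)^2 + (2*(X^2+Y^2)+1) * (X^2 - Y^2 - MvPolynomial.C c))
          - Y * (2*(X^2+Y^2) - 1) := by rw [hP]; ring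
    rw [hE]
    refine td_sub' _ _ ?_ ?_
    · refine td_mul' _ _ hXd (n := 5) (b := 4) ?_ (by norm_num)
      refine td_add' _ _ (td_pow' _ hr (by norm_num)) ?_
      exact td_mul' _ _ (b := 2) (a := 2) (td_add' _ _ hlin (le_trans h1 (by norm_num))) hq2 (by norm_num)
    · exact td_mul' _ _ hYd (b := 2) (td_sub' _ _ hlin (le_trans h1 (by norm_num))) (by norm_num)
  · have hE : Q - 2 * Y * (X^2 + Y^2)^3
        = Y * ((2*(X^2+Y^2)-1) * (X^2 - Y^2 - MvPolynomial.C c) - (X^2+Y^2)^2)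
          + X * (2*(X^2+Y^2) + 1) := by rw [hQ]; ring
    rw [hE]
    refine td_add' _ _ ?_ ?_
    · refine td_mul' _ _ hYd (n := 5) (b := 4) ?_ (by norm_num)
      refine td_sub' _ _ ?_ (td_pow' _ hr (by norm_num))
      exact td_mul' _ _ (a := 2) (b := 2) (td_sub' _ _ hlin (le_trans h1 (by norm_num))) hq2 (by norm_num)
    · exact td_mul' _ _ hXd (b := 2) (td_add' _ _ hlin (le_trans h1 (by norm_num))) (by norm_num)
  · intro x y
    rw [hP₇, hQ₇]; ring
end

section
/- Let c ∈ ℝ and let W : ℝ² → ℝ be a polynomial function with W(x,y) > 0 for all (x, y) ∈ ℝ². Then the set of zeros of the R5-class vector field, i.e. the set of (x, y) ∈ ℝ² with A(x,y)C(x,y) − B(x,y)W(x,y) = 0 and B(x,y)C(x,y) + A(x,y)W(x,y) = 0, is exactly the three-element set {(0, 0), (0, 1/√2), (0, −1/√2)}. -/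
/-- For any `c` and any everywhere-positive polynomial `W`, the zero set of the R5-class
vector field is exactly `{(0,0), (0, 1/√2), (0, −1/√2)}`. -/
theorem stmt17 (c : ℝ) (W : MvPolynomial (Fin 2) ℝ)
    (hW : ∀ x y : ℝ, 0 < MvPolynomial.eval ![x, y] W)
    (A B C : ℝ → ℝ → ℝ)
    (hA : ∀ x y : ℝ, A x y = x * (2*x^2 + 2*y^2 + 1))
    (hB : ∀ x y : ℝ, B x y = y * (2*x^2 + 2*y^2 - 1))
    (hC : ∀ x y : ℝ, C x y = (x^2 + y^2)^2 + x^2 - y^2 - c) :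
    {p : ℝ × ℝ |
        A p.1 p.2 * C p.1 p.2 - B p.1 p.2 * MvPolynomial.eval ![p.1, p.2] W = 0 ∧
        B p.1 p.2 * C p.1 p.2 + A p.1 p.2 * MvPolynomial.eval ![p.1, p.2] W = 0} =
      {((0 : ℝ), (0 : ℝ)), (0, 1 / Real.sqrt 2), (0, -(1 / Real.sqrt 2))} := by
  have hs2 : (Real.sqrt 2) ^ 2 = 2 := Real.sq_sqrt (by norm_num)
  have hs2pos : (0:ℝ) < Real.sqrt 2 := Real.sqrt_pos.mpr (by norm_num)
  ext ⟨x, y⟩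
  simp only [Set.mem_setOf_eq, Set.mem_insert_iff, Set.mem_singleton_iff, Prod.mk.injEq]
  constructor
  · rintro ⟨h1, h2⟩
    set w := MvPolynomial.eval ![x, y] W with hw
    have hwpos := hW x y
    rw [← hw] at hwpos
    have hAB : (A x y)^2 + (B x y)^2 = 0 := by
      have : ((A x y)^2 + (B x y)^2) * w = 0 := by
        linear_combination A x y * h2 - B x y * h1
      exact (mul_eq_zero.mp this).resolve_right (ne_of_gt hwpos)
    have hA0 : A x y = 0 := by nlinarith [sq_nonneg (A x y), sq_nonneg (B x y)]
    have hB0 : B x y = 0 := by nlinarith [sq_nonneg (A x y), sq_nonneg (B x y)]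
    rw [hA] at hA0
    rw [hB] at hB0
    have hx : x = 0 := by
      rcases mul_eq_zero.mp hA0 with h | h
      · exact h
      · nlinarith [sq_nonneg x, sq_nonneg y]
    subst hx
    rcases mul_eq_zero.mp hB0 with h | h
    · exact Or.inl ⟨rfl, h⟩
    · have hy2 : y^2 = 1/2 := by nlinarith
      have : (y - 1/Real.sqrt 2) * (y + 1/Real.sqrt 2) = 0 := by
        field_simp
        nlinarith
      rcases mul_eq_zero.mp this with h' | h'
      · exact Or.inr (Or.inl ⟨rfl, by linarith⟩)
      · exact Or.inr (Or.inr ⟨rfl, by linarith⟩)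
  · intro h
    have hAB : A x y = 0 ∧ B x y = 0 := by
      rcases h with ⟨hx, hy⟩ | ⟨hx, hy⟩ | ⟨hx, hy⟩ <;> subst hx <;> subst hy <;>
        refine ⟨by rw [hA]; norm_num, by rw [hB]; first | norm_num | (field_simp; nlinarith)⟩
    rw [hAB.1, hAB.2]
    constructor <;> ring
end

section
/- Let c ∈ ℝ and let W : ℝ² → ℝ be a polynomial function with W(x,y) > 0 for all (x, y) ∈ ℝ². Then the Jacobian matrix of the R5-class vector field at the origin (0,0) has determinant Δ = −(c² + W(0,0)²), which is strictly negative for every value of c; hence the origin is a saddle point independent of the parameter c and of the modification W. -/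
open Filter

/-! Along each coordinate axis, each component of the field has the form `t * g t` with `g`
continuous, so its derivative at `0` is `g 0`; only the continuity of `W` enters. This gives the
Jacobian `[[-c, W(0,0)], [W(0,0), c]]` at the origin. -/

theorem hasDerivAt_zero_of_forall_eq_mul {𝕜 : Type*} [NontriviallyNormedField 𝕜] {f g : 𝕜 → 𝕜}
    (hf : ∀ x, f x = x * g x) (hg : ContinuousAt g 0) : HasDerivAt f (g 0) 0 := by
  rw [hasDerivAt_iff_tendsto_slope]
  refine (hg.tendsto.mono_left nhdsWithin_le_nhds).congr' ?_
  filter_upwards [self_mem_nhdsWithin] with x (hx : x ≠ 0)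
  rw [slope_def_field, hf, hf, zero_mul, sub_zero, sub_zero, mul_div_cancel_left₀ _ hx]

/-- For any `c` and any everywhere-positive polynomial `W`, the Jacobian of the R5-class
vector field at the origin has determinant `Δ = −(c² + W(0,0)²) < 0`: the origin is a saddle
independent of `c` and of `W`. -/
theorem stmt18 (c : ℝ) (W : MvPolynomial (Fin 2) ℝ)
    (hW : ∀ x y : ℝ, 0 < MvPolynomial.eval ![x, y] W)
    (P Q : ℝ → ℝ → ℝ)
    (hP : ∀ x y : ℝ, P x y = x * (2*x^2 + 2*y^2 + 1) * ((x^2 + y^2)^2 + x^2 - y^2 - c)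
      - y * (2*x^2 + 2*y^2 - 1) * MvPolynomial.eval ![x, y] W)
    (hQ : ∀ x y : ℝ, Q x y = y * (2*x^2 + 2*y^2 - 1) * ((x^2 + y^2)^2 + x^2 - y^2 - c)
      + x * (2*x^2 + 2*y^2 + 1) * MvPolynomial.eval ![x, y] W)
    (Δ : ℝ)
    (hΔ : Δ = deriv (fun x : ℝ => P x 0) 0 * deriv (fun y : ℝ => Q 0 y) 0
      - deriv (fun y : ℝ => P 0 y) 0 * deriv (fun x : ℝ => Q x 0) 0) :
    Δ = -(c^2 + (MvPolynomial.eval ![(0 : ℝ), (0 : ℝ)] W)^2) ∧ Δ < 0 := by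
  have hWcont : Continuous fun v : Fin 2 → ℝ => MvPolynomial.eval v W :=
    MvPolynomial.continuous_eval W
  have hPx := hasDerivAt_zero_of_forall_eq_mul (f := (P · 0))
    (g := fun x => (2*x^2 + 1) * ((x^2)^2 + x^2 - c))
    (fun x => by rw [hP]; ring) (by fun_prop)
  have hPy := hasDerivAt_zero_of_forall_eq_mul (f := P 0)
    (g := fun y => (1 - 2*y^2) * MvPolynomial.eval ![0, y] W)
    (fun y => by rw [hP]; ring) (by fun_prop)
  have hQx := hasDerivAt_zero_of_forall_eq_mul (f := (Q · 0))
    (g := fun x => (2*x^2 + 1) * MvPolynomial.eval ![x, 0] W)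
    (fun x => by rw [hQ]; ring) (by fun_prop)
  have hQy := hasDerivAt_zero_of_forall_eq_mul (f := Q 0)
    (g := fun y => (2*y^2 - 1) * ((y^2)^2 - y^2 - c))
    (fun y => by rw [hQ]; ring) (by fun_prop)
  have hΔ_eq : Δ = -(c^2 + (MvPolynomial.eval ![(0 : ℝ), (0 : ℝ)] W)^2) := by
    rw [hΔ, hPx.deriv, hPy.deriv, hQx.deriv, hQy.deriv]
    ring
  exact ⟨hΔ_eq, by rw [hΔ_eq]; nlinarith [hW 0 0, sq_nonneg c]⟩
end

section
/- Let c ∈ ℝ and let W : ℝ² → ℝ be a polynomial function with W(x,y) > 0 for all (x, y) ∈ ℝ². Then at each of the two points p = (0, 1/√2) and p = (0, −1/√2), the Jacobian matrix of the R5-class vector field has trace τ = −(1 + 4c) and satisfies τ² − 4Δ = −16·W(p)² < 0, where Δ is its determinant; hence each of these fixed points is a spiral, unstable when c < −1/4 (τ > 0) and stable when c > −1/4 (τ < 0), for every admissible choice of W. -/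
/-!
At `p = (0, s)` with `s² = 1/2` both `A` and `B` vanish (`B` because `2x² + 2y² = 1` there), so
the product rule reduces the Jacobian of `(AC - BW, BC + AW)` at `p` to
`C(p) · J(A, B) + W(p) · J(-B, A)`. Since `J(A, B)(p) = 2·I`, this is
`2 · [[C(p), -W(p)], [W(p), C(p)]]`, with trace `4 C(p) = -(1 + 4c)` and
`τ² - 4Δ = -16 W(p)²`.
-/

open MvPolynomial

theorem MvPolynomial.differentiable_eval {𝕜 σ : Type*} [NontriviallyNormedField 𝕜]
    [CompleteSpace 𝕜] [Fintype σ] (p : MvPolynomial σ 𝕜) :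
    Differentiable 𝕜 (fun v : σ → 𝕜 => eval v p) :=
  fun v => (AnalyticOnNhd.eval_mvPolynomial p v trivial).differentiableAt

section VecCons

variable {𝕜 E : Type*} [NontriviallyNormedField 𝕜] [NormedAddCommGroup E] [NormedSpace 𝕜 E]

theorem differentiable_vecCons_left (b : E) : Differentiable 𝕜 (fun a : E => ![a, b]) := by
  rw [differentiable_pi]
  intro i
  fin_cases i
  · exact differentiable_id
  · exact differentiable_const b

theorem differentiable_vecCons_right (a : E) : Differentiable 𝕜 (fun b : E => ![a, b]) := by
  rw [differentiable_pi]
  intro i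
  fin_cases i
  · exact differentiable_const a
  · exact differentiable_id

end VecCons

theorem HasDerivAt.mul_of_eq_zero {𝕜 : Type*} [NontriviallyNormedField 𝕜] {f g : 𝕜 → 𝕜}
    {f' x : 𝕜} (hf : HasDerivAt f f' x) (hfx : f x = 0) (hg : DifferentiableAt 𝕜 g x) :
    HasDerivAt (fun y => f y * g y) (f' * g x) x := by
  simpa [hfx] using hf.fun_mul hg.hasDerivAt

namespace R5

def A (x y : ℝ) : ℝ := x * (2*x^2 + 2*y^2 + 1)

def B (x y : ℝ) : ℝ := y * (2*x^2 + 2*y^2 - 1)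

def C (c x y : ℝ) : ℝ := (x^2 + y^2)^2 + x^2 - y^2 - c

def P (c : ℝ) (w : ℝ → ℝ → ℝ) (x y : ℝ) : ℝ := A x y * C c x y - B x y * w x y

def Q (c : ℝ) (w : ℝ → ℝ → ℝ) (x y : ℝ) : ℝ := B x y * C c x y + A x y * w x y

theorem hasDerivAt_A_left (x y : ℝ) : HasDerivAt (fun x => A x y) (6*x^2 + 2*y^2 + 1) x := by
  refine ((hasDerivAt_id' x).fun_mul
    ((((hasDerivAt_pow 2 x).const_mul 2).add_const (2*y^2)).add_const 1)).congr_deriv ?_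
  ring

theorem hasDerivAt_A_right (x y : ℝ) : HasDerivAt (fun y => A x y) (4*x*y) y := by
  refine (((((hasDerivAt_pow 2 y).const_mul 2).const_add (2*x^2)).add_const 1).const_mul
    x).congr_deriv ?_
  ring

theorem hasDerivAt_B_left (x y : ℝ) : HasDerivAt (fun x => B x y) (4*x*y) x := by
  refine (((((hasDerivAt_pow 2 x).const_mul 2).add_const (2*y^2)).sub_const 1).const_mul
    y).congr_deriv ?_
  ring

theorem hasDerivAt_B_right (x y : ℝ) : HasDerivAt (fun y => B x y) (2*x^2 + 6*y^2 - 1) y := by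
  refine ((hasDerivAt_id' y).fun_mul
    ((((hasDerivAt_pow 2 y).const_mul 2).const_add (2*x^2)).sub_const 1)).congr_deriv ?_
  ring

theorem differentiable_C_left (c y : ℝ) : Differentiable ℝ (fun x => C c x y) := by
  unfold C; fun_prop

theorem differentiable_C_right (c x : ℝ) : Differentiable ℝ (fun y => C c x y) := by
  unfold C; fun_prop

variable {c s : ℝ} {w : ℝ → ℝ → ℝ}

theorem A_zero_left (y : ℝ) : A 0 y = 0 := by
  simp [A]

theorem B_zero_left (hs : s^2 = 1/2) : B 0 s = 0 := by
  simp only [B]; linear_combination (2 * s) * hs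

theorem C_zero_left (hs : s^2 = 1/2) : C c 0 s = -(1/4) - c := by
  simp only [C]; linear_combination (s^2 - 1/2) * hs

theorem hasDerivAt_P_left (hs : s^2 = 1/2) (hw : DifferentiableAt ℝ (fun x => w x s) 0) :
    HasDerivAt (fun x => P c w x s) (2 * C c 0 s) 0 := by
  have hAC := (hasDerivAt_A_left 0 s).mul_of_eq_zero (A_zero_left s)
    (differentiable_C_left c s 0)
  have hBw := (hasDerivAt_B_left 0 s).mul_of_eq_zero (B_zero_left hs) hw
  refine (hAC.sub hBw).congr_deriv ?_
  linear_combination (2 * C c 0 s) * hs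

theorem hasDerivAt_Q_left (hs : s^2 = 1/2) (hw : DifferentiableAt ℝ (fun x => w x s) 0) :
    HasDerivAt (fun x => Q c w x s) (2 * w 0 s) 0 := by
  have hBC := (hasDerivAt_B_left 0 s).mul_of_eq_zero (B_zero_left hs)
    (differentiable_C_left c s 0)
  have hAw := (hasDerivAt_A_left 0 s).mul_of_eq_zero (A_zero_left s) hw
  refine (hBC.add hAw).congr_deriv ?_
  linear_combination (2 * w 0 s) * hs

theorem hasDerivAt_P_right (hs : s^2 = 1/2) (hw : DifferentiableAt ℝ (fun y => w 0 y) s) :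
    HasDerivAt (fun y => P c w 0 y) (-2 * w 0 s) s := by
  have hAC := (hasDerivAt_A_right 0 s).mul_of_eq_zero (A_zero_left s)
    (differentiable_C_right c 0 s)
  have hBw := (hasDerivAt_B_right 0 s).mul_of_eq_zero (B_zero_left hs) hw
  refine (hAC.sub hBw).congr_deriv ?_
  linear_combination (-6 * w 0 s) * hs

theorem hasDerivAt_Q_right (hs : s^2 = 1/2) (hw : DifferentiableAt ℝ (fun y => w 0 y) s) :
    HasDerivAt (fun y => Q c w 0 y) (2 * C c 0 s) s := by
  have hBC := (hasDerivAt_B_right 0 s).mul_of_eq_zero (B_zero_left hs)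
    (differentiable_C_right c 0 s)
  have hAw := (hasDerivAt_A_right 0 s).mul_of_eq_zero (A_zero_left s) hw
  refine (hBC.add hAw).congr_deriv ?_
  linear_combination (6 * C c 0 s) * hs

end R5

/-- For any `c` and any everywhere-positive polynomial `W`, at each of the points
`(0, ±1/√2)` the Jacobian of the R5-class vector field has trace `τ = −(1+4c)` and satisfies
`τ² − 4Δ = −16·W(p)² < 0`: each point is a spiral, unstable when `c < −1/4` and stable when
`c > −1/4`. -/
theorem stmt19 (c : ℝ) (W : MvPolynomial (Fin 2) ℝ)
    (hW : ∀ x y : ℝ, 0 < MvPolynomial.eval ![x, y] W)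
    (P Q : ℝ → ℝ → ℝ)
    (hP : ∀ x y : ℝ, P x y = x * (2*x^2 + 2*y^2 + 1) * ((x^2 + y^2)^2 + x^2 - y^2 - c)
      - y * (2*x^2 + 2*y^2 - 1) * MvPolynomial.eval ![x, y] W)
    (hQ : ∀ x y : ℝ, Q x y = y * (2*x^2 + 2*y^2 - 1) * ((x^2 + y^2)^2 + x^2 - y^2 - c)
      + x * (2*x^2 + 2*y^2 + 1) * MvPolynomial.eval ![x, y] W) :
    ∀ s : ℝ, (s = 1 / Real.sqrt 2 ∨ s = -(1 / Real.sqrt 2)) →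
      ∀ τ Δ : ℝ,
        τ = deriv (fun x : ℝ => P x s) 0 + deriv (fun y : ℝ => Q 0 y) s →
        Δ = deriv (fun x : ℝ => P x s) 0 * deriv (fun y : ℝ => Q 0 y) s
          - deriv (fun y : ℝ => P 0 y) s * deriv (fun x : ℝ => Q x s) 0 →
        τ = -(1 + 4*c) ∧
        τ^2 - 4*Δ = -16 * (MvPolynomial.eval ![(0 : ℝ), s] W)^2 ∧
        τ^2 - 4*Δ < 0 ∧
        (c < -(1/4) → 0 < τ) ∧
        (-(1/4) < c → τ < 0) := by
  intro s hs τ Δ hτ hΔ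
  have hs2 : s^2 = 1/2 := by rcases hs with rfl | rfl <;> simp
  obtain rfl : P = R5.P c (fun x y => eval ![x, y] W) := funext fun x => funext (hP x)
  obtain rfl : Q = R5.Q c (fun x y => eval ![x, y] W) := funext fun x => funext (hQ x)
  have hWx : DifferentiableAt ℝ (fun x => eval ![x, s] W) 0 :=
    (W.differentiable_eval.comp (differentiable_vecCons_left s)) 0
  have hWy : DifferentiableAt ℝ (fun y => eval ![0, y] W) s :=
    (W.differentiable_eval.comp (differentiable_vecCons_right 0)) s
  rw [(R5.hasDerivAt_P_left hs2 hWx).deriv, (R5.hasDerivAt_Q_right hs2 hWy).deriv,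
    R5.C_zero_left hs2] at hτ hΔ
  rw [(R5.hasDerivAt_P_right hs2 hWy).deriv, (R5.hasDerivAt_Q_left hs2 hWx).deriv] at hΔ
  have hdisc : τ^2 - 4*Δ = -16 * (eval ![0, s] W)^2 := by rw [hτ, hΔ]; ring
  refine ⟨by linarith, hdisc, ?_, fun hc => by linarith, fun hc => by linarith⟩
  rw [hdisc]
  nlinarith [hW 0 s]
end
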